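/- arXiv:2403.13386 — 4 statements merged into one kernel-verified Lean document; each statement's English description precedes it below -/
import Mathlib

section
/- Suppose X = ℝ^d, 𝒳 = C(ℝ; ℝ^d), and f : ℝ^d → ℝ is such that the function F₀(f) : 𝒳 → ℝ, F₀(f)(x) = f(x(0)), satisfies: for every x ∈ 𝒳 the limit lim_{t→0} (f(x(t)) − f(x(0)))/t exists. Then f is constant. (Proof idea: for x₀, v ∈ ℝ^d consider the path x(t) = x₀ + |t| v; existence of the two-sided limit forces all directional derivatives of f to vanish.) -/
open Filter Topology

theorem eq_zero_of_tendsto_nhdsNE_of_odd {q : ℝ → ℝ} {L : ℝ} (hodd : ∀ t, q (-t) = -q t)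
    (hq : Tendsto q (𝓝[≠] 0) (𝓝 L)) : L = 0 := by
  have hneg : Tendsto (fun t : ℝ ↦ -t) (𝓝[≠] 0) (𝓝[≠] 0) := by
    have h := (Filter.neg_nhdsNE (a := (0 : ℝ))).le
    rwa [neg_zero] at h
  have h₁ : Tendsto (fun t ↦ q (-t)) (𝓝[≠] 0) (𝓝 L) := hq.comp hneg
  have h₂ : Tendsto (fun t ↦ q (-t)) (𝓝[≠] 0) (𝓝 (-L)) := by simpa only [hodd] using hq.neg
  linarith [tendsto_nhds_unique h₁ h₂]

section

variable {E : Type*} [TopologicalSpace E] [AddCommGroup E] [Module ℝ E] [ContinuousAdd E]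
  [ContinuousSMul ℝ E]

def HasPathDifferenceQuotientLimits (f : E → ℝ) : Prop :=
  ∀ x : ℝ → E, Continuous x →
    ∃ L : ℝ, Tendsto (fun t : ℝ ↦ (f (x t) - f (x 0)) / t) (𝓝[≠] 0) (𝓝 L)

variable {f : E → ℝ}

theorem HasPathDifferenceQuotientLimits.hasDerivAt_line_zero
    (hf : HasPathDifferenceQuotientLimits f) (p v : E) :
    HasDerivAt (fun s : ℝ ↦ f (p + s • v)) 0 0 := by
  obtain ⟨L, hL⟩ := hf (fun t ↦ p + t • v) (by fun_prop)
  -- Along `p + |t| • v` the difference quotient is odd in `t`, so its limit vanishes.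
  obtain ⟨M, hM⟩ := hf (fun t ↦ p + |t| • v) (by fun_prop)
  have hM0 : M = 0 := eq_zero_of_tendsto_nhdsNE_of_odd (fun t ↦ by simp [div_neg]) hM
  have hLM : L = M := by
    refine tendsto_nhds_unique (hL.mono_left (nhdsGT_le_nhdsNE 0)) ?_
    refine (hM.mono_left (nhdsGT_le_nhdsNE 0)).congr' ?_
    filter_upwards [self_mem_nhdsWithin] with t (ht : 0 < t)
    simp [abs_of_pos ht]
  rw [hM0] at hLM
  subst hLM
  rw [hasDerivAt_iff_tendsto_slope_zero]
  refine hL.congr' (Eventually.of_forall fun t ↦ ?_)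
  simp [div_eq_inv_mul]

theorem HasPathDifferenceQuotientLimits.hasDerivAt_line
    (hf : HasPathDifferenceQuotientLimits f) (p v : E) (t : ℝ) :
    HasDerivAt (fun s : ℝ ↦ f (p + s • v)) 0 t := by
  have h := HasDerivAt.comp_sub_const t t <| by
    rw [sub_self]; exact hf.hasDerivAt_line_zero (p + t • v) v
  simpa only [add_assoc, ← add_smul, add_sub_cancel] using h

theorem HasPathDifferenceQuotientLimits.apply_eq_apply
    (hf : HasPathDifferenceQuotientLimits f) (a b : E) : f a = f b := by
  have hline := hf.hasDerivAt_line a (b - a)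
  simpa using is_const_of_deriv_eq_zero (fun t ↦ (hline t).differentiableAt)
    (fun t ↦ (hline t).deriv) 0 1

end

/-- Let `𝒳 = C(ℝ; ℝ^d)` and `f : ℝ^d → ℝ` be such that for every continuous path `x` the
limit `lim_{t→0} (f (x t) − f (x 0))/t` exists (i.e. the evaluation functional
`F₀(f) : x ↦ f (x 0)` is differentiable along the shift group on every path).
Then `f` is constant. -/
theorem eval_functional_in_domain_implies_constant
    {d : ℕ} (f : (Fin d → ℝ) → ℝ)
    (hf : ∀ x : ℝ → (Fin d → ℝ), Continuous x →
      ∃ L : ℝ, Filter.Tendsto (fun t : ℝ => (f (x t) - f (x 0)) / t)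
        (nhdsWithin 0 {(0:ℝ)}ᶜ) (nhds L)) :
    ∀ a b : Fin d → ℝ, f a = f b :=
  HasPathDifferenceQuotientLimits.apply_eq_apply hf
end

section
/- Let 𝔼 be a Markovian kernel operator on B_b(𝒳) with kernel k. If for every F ∈ B_b(𝒳) the function 𝔼F is ℱ₀₋-measurable and 𝔼F = F whenever F is ℱ₀₋-measurable, then for all A₋ ∈ ℱ₀₋, A ∈ 𝔅(𝒳), and x ∈ 𝒳: k(x, A₋ ∩ A) = δ_{τ(x)}(A₋) · k(τ(x), A). -/
/-! Let `𝔼` be a projection onto the `ℱ₀₋`-measurable functions. Testing `𝔼 = id` on the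
indicator of `A₋ ∈ ℱ₀₋` shows that `k(x, ·)` gives `A₋` mass `δ_x(A₋) ∈ {0, 1}`, so
`k(x, A₋ ∩ A) = δ_x(A₋) k(x, A)`. Every `ℱ₀₋`-measurable function is constant on the fibres
`{x, τ x}`, since its level sets are `τ`-invariant; applied to `δ_·(A₋)` and to the
`ℱ₀₋`-measurable function `x ↦ k(x, A) = 𝔼 1_A (x)`, this lets us replace `x` by `τ x`. -/

open MeasureTheory Set
open scoped ENNReal

/-- The σ-algebra on a set `𝒳` of paths `ℝ → X` generated by the evaluation maps
`π_t : x ↦ x t` for `t ∈ I`. -/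
def evalSigma {X : Type*} [m : MeasurableSpace X] (𝒳 : Set (ℝ → X)) (I : Set ℝ) :
    MeasurableSpace 𝒳 :=
  ⨆ t ∈ I, MeasurableSpace.comap (fun x : 𝒳 => x.1 t) m

lemma evalSigma_mono {X : Type*} [MeasurableSpace X] (𝒳 : Set (ℝ → X)) {I J : Set ℝ}
    (hIJ : I ⊆ J) : evalSigma 𝒳 I ≤ evalSigma 𝒳 J :=
  biSup_mono fun _ ht => hIJ ht

lemma exists_abs_indicator_one_le {Y : Type*} (S : Set Y) :
    ∃ C, ∀ y, |S.indicator (1 : Y → ℝ) y| ≤ C :=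
  ⟨1, fun y => by by_cases hy : y ∈ S <;> simp [hy]⟩

lemma apply_eq_of_preimage_eq_self {Y β : Type*} [MeasurableSpace β]
    [MeasurableSingletonClass β] {m0 : MeasurableSpace Y} {τ : Y → Y}
    (hτ : ∀ A : Set Y, MeasurableSet[m0] A → τ ⁻¹' A = A) {g : Y → β}
    (hg : Measurable[m0] g) (x : Y) : g (τ x) = g x :=
  show x ∈ τ ⁻¹' (g ⁻¹' {g x}) by rw [hτ _ (hg (measurableSet_singleton _))]; rfl

section

variable {Y : Type*} {mY : MeasurableSpace Y}

lemma measure_eq_dirac_of_integral_indicator_eq {μ : Measure Y} [IsFiniteMeasure μ]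
    {S : Set Y} (hS : MeasurableSet S) {x : Y}
    (h : ∫ y, S.indicator 1 y ∂μ = S.indicator (1 : Y → ℝ) x) : μ S = Measure.dirac x S := by
  rw [integral_indicator_one hS] at h
  rw [Measure.dirac_apply' _ hS, ← ENNReal.ofReal_toReal (measure_ne_top μ S)]
  by_cases hx : x ∈ S <;> simp_all [measureReal_def]

lemma measure_inter_eq_dirac_mul {μ : Measure Y} [IsProbabilityMeasure μ] {S : Set Y}
    (hS : MeasurableSet S) {x : Y} (hμS : μ S = Measure.dirac x S) (A : Set Y) :
    μ (S ∩ A) = Measure.dirac x S * μ A := by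
  rw [Measure.dirac_apply' _ hS] at hμS ⊢
  by_cases hx : x ∈ S
  · simp only [hx, indicator_of_mem, Pi.one_apply, one_mul] at hμS ⊢
    rw [inter_comm, measure_inter_conull ((prob_compl_eq_zero_iff hS).mpr hμS)]
  · simp only [hx, not_false_eq_true, indicator_of_notMem] at hμS ⊢
    rw [zero_mul, measure_mono_null inter_subset_left hμS]

end

theorem expectation_operator_kernel_factorization_general
    {X : Type*} [MeasurableSpace X]
    (𝒳 : Set (ℝ → X))
    (τ : 𝒳 → 𝒳)
    (hτinv : ∀ A : Set 𝒳, MeasurableSet[evalSigma 𝒳 (Set.Iio 0)] A → τ ⁻¹' A = A)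
    (k : 𝒳 → @Measure 𝒳 (evalSigma 𝒳 Set.univ))
    (hprob : ∀ x, IsProbabilityMeasure (k x))
    (hEmeas : ∀ F : 𝒳 → ℝ, (∃ C, ∀ x, |F x| ≤ C) →
      @Measurable 𝒳 ℝ (evalSigma 𝒳 Set.univ) _ F →
      @Measurable 𝒳 ℝ (evalSigma 𝒳 (Set.Iio 0)) _ (fun x => ∫ y, F y ∂(k x)))
    (hEproj : ∀ F : 𝒳 → ℝ, (∃ C, ∀ x, |F x| ≤ C) →
      @Measurable 𝒳 ℝ (evalSigma 𝒳 (Set.Iio 0)) _ F →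
      ∀ x, ∫ y, F y ∂(k x) = F x) :
    ∀ Am : Set 𝒳, MeasurableSet[evalSigma 𝒳 (Set.Iio 0)] Am →
      ∀ A : Set 𝒳, MeasurableSet[evalSigma 𝒳 Set.univ] A →
        ∀ x : 𝒳, k x (Am ∩ A) =
          @Measure.dirac 𝒳 (evalSigma 𝒳 Set.univ) (τ x) Am * k (τ x) A := by
  intro Am hAm A hA x
  -- otherwise `Measure.dirac` would pick the subtype σ-algebra inherited from `ℝ → X`
  let : MeasurableSpace 𝒳 := evalSigma 𝒳 univ
  have := hprob x
  have := hprob (τ x)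
  have hAm' := evalSigma_mono 𝒳 (subset_univ _) _ hAm
  have hkAm : k x Am = Measure.dirac x Am := measure_eq_dirac_of_integral_indicator_eq hAm'
    (hEproj _ (exists_abs_indicator_one_le Am) (measurable_const.indicator hAm) x)
  have hdirac : Measure.dirac (τ x) Am = Measure.dirac x Am := by
    rw [Measure.dirac_apply' _ hAm', Measure.dirac_apply' _ hAm']
    exact apply_eq_of_preimage_eq_self hτinv (measurable_const.indicator hAm) x
  have hkA : k (τ x) A = k x A := by
    have := apply_eq_of_preimage_eq_self hτinv
      (hEmeas _ (exists_abs_indicator_one_le A) (measurable_const.indicator hA)) x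
    simp only [integral_indicator_one hA, measureReal_def] at this
    exact (ENNReal.toReal_eq_toReal_iff' (measure_ne_top _ _) (measure_ne_top _ _)).mp this
  rw [measure_inter_eq_dirac_mul hAm' hkAm, hdirac, hkA]

/-- Let `𝔼` be a Markovian kernel operator on `B_b(𝒳)` with kernel `k`,
`(𝔼 F)(x) = ∫ F dk(x,·)`.  If for every bounded measurable `F` the function `𝔼 F` is
`ℱ₀₋`-measurable, and `𝔼 F = F` whenever `F` is `ℱ₀₋`-measurable, then
`k(x, A₋ ∩ A) = δ_{τ(x)}(A₋) · k(τ(x), A)` for all `A₋ ∈ ℱ₀₋`, `A` Borel and `x ∈ 𝒳`. -/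
theorem expectation_operator_kernel_factorization
    {X : Type*} [MetricSpace X] [CompleteSpace X]
    [TopologicalSpace.SeparableSpace X] [MeasurableSpace X] [BorelSpace X]
    (𝒳 : Set (ℝ → X))
    (τ : 𝒳 → 𝒳)
    (hτinv : ∀ A : Set 𝒳, MeasurableSet[evalSigma 𝒳 (Set.Iio 0)] A → τ ⁻¹' A = A)
    (k : 𝒳 → @Measure 𝒳 (evalSigma 𝒳 Set.univ))
    (hprob : ∀ x, IsProbabilityMeasure (k x))
    (hkmeas : ∀ A : Set 𝒳, MeasurableSet[evalSigma 𝒳 Set.univ] A →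
      @Measurable 𝒳 ℝ≥0∞ (evalSigma 𝒳 Set.univ) _ (fun x => k x A))
    (hEmeas : ∀ F : 𝒳 → ℝ, (∃ C, ∀ x, |F x| ≤ C) →
      @Measurable 𝒳 ℝ (evalSigma 𝒳 Set.univ) _ F →
      @Measurable 𝒳 ℝ (evalSigma 𝒳 (Set.Iio 0)) _ (fun x => ∫ y, F y ∂(k x)))
    (hEproj : ∀ F : 𝒳 → ℝ, (∃ C, ∀ x, |F x| ≤ C) →
      @Measurable 𝒳 ℝ (evalSigma 𝒳 (Set.Iio 0)) _ F →
      ∀ x, ∫ y, F y ∂(k x) = F x) :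
    ∀ Am : Set 𝒳, MeasurableSet[evalSigma 𝒳 (Set.Iio 0)] Am →
      ∀ A : Set 𝒳, MeasurableSet[evalSigma 𝒳 Set.univ] A →
        ∀ x : 𝒳, k x (Am ∩ A) =
          @Measure.dirac 𝒳 (evalSigma 𝒳 Set.univ) (τ x) Am * k (τ x) A :=
  expectation_operator_kernel_factorization_general 𝒳 τ hτinv k hprob hEmeas hEproj
end

section
/- Let 𝔼 be an expectation operator (a Markovian kernel operator with 𝔼F ℱ₀₋-measurable for all F ∈ B_b(𝒳), and 𝔼F = F for ℱ₀₋-measurable F) and define 𝔼_t := Θ_t 𝔼 Θ_{−t}. Then 𝔼 is homogeneous (𝔼 = 𝔼𝔼_t for all t ≥ 0) if and only if its kernel k satisfies ∫ k(ϑ_t y, ϑ_t A) k(x, dy) = k(x, A) for every x ∈ 𝒳, t ≥ 0, and Borel A ⊂ 𝒳. -/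
open MeasureTheory Set Filter Topology
open scoped ENNReal

/-!
The kernel of `𝔼_t = Θ_t 𝔼 Θ_{−t}` is `y ↦ (k (ϑ_t y)).map ϑ_{−t}`, and `𝔼 = 𝔼 𝔼_t` says that
composing this kernel after `k` gives back `k`. Tested on bounded measurable functions, this
equality of kernels is the integral form of homogeneity; tested on indicators, it is the kernel
identity, since `ϑ_{−t}⁻¹' A = ϑ_t '' A`. Either family of tests determines a finite measure.
-/

open ProbabilityTheory

namespace MeasureTheory

variable {α : Type*} [MeasurableSpace α]

theorem integrable_of_exists_abs_le {μ : Measure α} [IsFiniteMeasure μ] {F : α → ℝ}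
    (hbdd : ∃ C, ∀ x, |F x| ≤ C) (hF : Measurable F) : Integrable F μ := by
  obtain ⟨C, hC⟩ := hbdd
  exact .of_bound hF.aestronglyMeasurable C (ae_of_all _ hC)

theorem Measure.ext_of_forall_integral_bounded_eq {μ ν : Measure α} [IsFiniteMeasure μ]
    [IsFiniteMeasure ν]
    (h : ∀ F : α → ℝ, (∃ C, ∀ x, |F x| ≤ C) → Measurable F → ∫ x, F x ∂μ = ∫ x, F x ∂ν) :
    μ = ν := by
  ext A hA
  have hF := h (A.indicator 1) ⟨1, fun x => by by_cases hx : x ∈ A <;> simp [hx]⟩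
    (measurable_one.indicator hA)
  rwa [integral_indicator_one hA, integral_indicator_one hA,
    measureReal_eq_measureReal_iff] at hF

end MeasureTheory

namespace ProbabilityTheory.Kernel

variable {α β : Type*} [MeasurableSpace α] [MeasurableSpace β]

theorem comp_eq_self_iff_integral_integral {κ : Kernel α β} {η : Kernel β β}
    [IsMarkovKernel κ] [IsMarkovKernel η] :
    η ∘ₖ κ = κ ↔ ∀ F : β → ℝ, (∃ C, ∀ x, |F x| ≤ C) → Measurable F →
      ∀ a, ∫ y, ∫ z, F z ∂η y ∂κ a = ∫ y, F y ∂κ a := by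
  constructor
  · intro hcomp F hbdd hF a
    rw [← integral_comp (integrable_of_exists_abs_le hbdd hF), hcomp]
  · intro h
    ext1 a
    refine Measure.ext_of_forall_integral_bounded_eq fun F hbdd hF => ?_
    rw [integral_comp (integrable_of_exists_abs_le hbdd hF), h F hbdd hF]

theorem comp_eq_self_iff_lintegral {κ : Kernel α β} {η : Kernel β β} :
    η ∘ₖ κ = κ ↔ ∀ a A, MeasurableSet A → ∫⁻ y, η y A ∂κ a = κ a A := by
  rw [ext_iff']
  exact forall₃_congr fun a A hA => by rw [comp_apply' _ _ _ hA]

end ProbabilityTheory.Kernel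

theorem image_flow_eq_preimage_neg {α : Type*} {ϑ : ℝ → α → α} (hzero : ∀ x, ϑ 0 x = x)
    (hgroup : ∀ s t x, ϑ s (ϑ t x) = ϑ (s + t) x) (t : ℝ) (A : Set α) :
    ϑ t '' A = ϑ (-t) ⁻¹' A :=
  congrFun (image_eq_preimage_of_inverse (f := ϑ t) (g := ϑ (-t))
    (fun x => by rw [hgroup, neg_add_cancel, hzero])
    (fun x => by rw [hgroup, add_neg_cancel, hzero])) A

theorem expectation_operator_homogeneous_iff_kernel_identity_general
    {X : Type*} [MeasurableSpace X]
    (𝒳 : Set (ℝ → X)) (ϑ : ℝ → 𝒳 → 𝒳)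
    (hzero : ∀ x, ϑ 0 x = x)
    (hgroup : ∀ (s t : ℝ) (x : 𝒳), ϑ s (ϑ t x) = ϑ (s + t) x)
    (hϑmeas : ∀ t : ℝ,
      @Measurable 𝒳 𝒳 (evalSigma 𝒳 Set.univ) (evalSigma 𝒳 Set.univ) (ϑ t))
    (k : 𝒳 → @Measure 𝒳 (evalSigma 𝒳 Set.univ))
    (hprob : ∀ x, IsProbabilityMeasure (k x))
    (hkmeas : ∀ A : Set 𝒳, MeasurableSet[evalSigma 𝒳 Set.univ] A →
      @Measurable 𝒳 ℝ≥0∞ (evalSigma 𝒳 Set.univ) _ (fun x => k x A)) :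
    (∀ t : ℝ, 0 ≤ t → ∀ F : 𝒳 → ℝ, (∃ C, ∀ x, |F x| ≤ C) →
      @Measurable 𝒳 ℝ (evalSigma 𝒳 Set.univ) _ F →
      ∀ x, ∫ y, (∫ z, F (ϑ (-t) z) ∂(k (ϑ t y))) ∂(k x) = ∫ y, F y ∂(k x)) ↔
    (∀ x : 𝒳, ∀ t : ℝ, 0 ≤ t → ∀ A : Set 𝒳, MeasurableSet[evalSigma 𝒳 Set.univ] A →
      ∫⁻ y, k (ϑ t y) (ϑ t '' A) ∂(k x) = k x A) := by
  let : MeasurableSpace 𝒳 := evalSigma 𝒳 Set.univ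
  let κ : Kernel 𝒳 𝒳 := ⟨k, Measure.measurable_of_measurable_coe k hkmeas⟩
  have : IsMarkovKernel κ := ⟨hprob⟩
  let η (t : ℝ) : Kernel 𝒳 𝒳 := (κ.comap (ϑ t) (hϑmeas t)).map (ϑ (-t))
  have (t : ℝ) : IsMarkovKernel (η t) := Kernel.IsMarkovKernel.map _ (hϑmeas (-t))
  have hη_integral (t : ℝ) (F : 𝒳 → ℝ) (hF : Measurable F) (y : 𝒳) :
      ∫ z, F z ∂η t y = ∫ z, F (ϑ (-t) z) ∂k (ϑ t y) := by
    rw [Kernel.map_apply _ (hϑmeas (-t)), integral_map (hϑmeas (-t)).aemeasurable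
      hF.aestronglyMeasurable]
    rfl
  have hη_apply (t : ℝ) (y : 𝒳) (A : Set 𝒳) (hA : MeasurableSet A) :
      η t y A = k (ϑ t y) (ϑ t '' A) := by
    rw [Kernel.map_apply' _ (hϑmeas (-t)) _ hA, image_flow_eq_preimage_neg hzero hgroup]
    rfl
  calc _ ↔ ∀ t, 0 ≤ t → η t ∘ₖ κ = κ := by
        refine forall₂_congr fun t _ => ?_
        rw [Kernel.comp_eq_self_iff_integral_integral]
        exact forall₃_congr fun F _ hF => by simp only [hη_integral t F hF]; rfl
    _ ↔ ∀ t, 0 ≤ t → ∀ x A, MeasurableSet A →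
          ∫⁻ y, k (ϑ t y) (ϑ t '' A) ∂k x = k x A := by
        refine forall₂_congr fun t _ => ?_
        rw [Kernel.comp_eq_self_iff_lintegral]
        exact forall₃_congr fun x A hA => by simp only [hη_apply t _ A hA]; rfl
    _ ↔ _ := ⟨fun h x t ht => h t ht x, fun h t ht x => h x t ht⟩

/-- Let `𝔼` be an expectation operator with kernel `k`, and `𝔼_t := Θ_t 𝔼 Θ_{−t}` where
`Θ_t F = F ∘ ϑ_t`.  Then `𝔼` is homogeneous, i.e. `𝔼 = 𝔼 𝔼_t` for all `t ≥ 0`, if and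
only if `∫ k(ϑ_t y, ϑ_t A) k(x, dy) = k(x, A)` for every `x`, `t ≥ 0` and Borel `A`. -/
theorem expectation_operator_homogeneous_iff_kernel_identity
    {X : Type*} [MetricSpace X] [CompleteSpace X]
    [TopologicalSpace.SeparableSpace X] [MeasurableSpace X] [BorelSpace X]
    (𝒳 : Set (ℝ → X)) (ϑ : ℝ → 𝒳 → 𝒳)
    (hϑ : ∀ (t : ℝ) (x : 𝒳) (s : ℝ), (ϑ t x).1 s = x.1 (t + s))
    (hzero : ∀ x, ϑ 0 x = x)
    (hgroup : ∀ (s t : ℝ) (x : 𝒳), ϑ s (ϑ t x) = ϑ (s + t) x)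
    (hϑmeas : ∀ t : ℝ,
      @Measurable 𝒳 𝒳 (evalSigma 𝒳 Set.univ) (evalSigma 𝒳 Set.univ) (ϑ t))
    (k : 𝒳 → @Measure 𝒳 (evalSigma 𝒳 Set.univ))
    (hprob : ∀ x, IsProbabilityMeasure (k x))
    (hkmeas : ∀ A : Set 𝒳, MeasurableSet[evalSigma 𝒳 Set.univ] A →
      @Measurable 𝒳 ℝ≥0∞ (evalSigma 𝒳 Set.univ) _ (fun x => k x A))
    (hEmeas : ∀ F : 𝒳 → ℝ, (∃ C, ∀ x, |F x| ≤ C) →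
      @Measurable 𝒳 ℝ (evalSigma 𝒳 Set.univ) _ F →
      @Measurable 𝒳 ℝ (evalSigma 𝒳 (Set.Iio 0)) _ (fun x => ∫ y, F y ∂(k x)))
    (hEproj : ∀ F : 𝒳 → ℝ, (∃ C, ∀ x, |F x| ≤ C) →
      @Measurable 𝒳 ℝ (evalSigma 𝒳 (Set.Iio 0)) _ F →
      ∀ x, ∫ y, F y ∂(k x) = F x) :
    (∀ t : ℝ, 0 ≤ t → ∀ F : 𝒳 → ℝ, (∃ C, ∀ x, |F x| ≤ C) →
      @Measurable 𝒳 ℝ (evalSigma 𝒳 Set.univ) _ F →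
      ∀ x, ∫ y, (∫ z, F (ϑ (-t) z) ∂(k (ϑ t y))) ∂(k x) = ∫ y, F y ∂(k x)) ↔
    (∀ x : 𝒳, ∀ t : ℝ, 0 ≤ t → ∀ A : Set 𝒳, MeasurableSet[evalSigma 𝒳 Set.univ] A →
      ∫⁻ y, k (ϑ t y) (ϑ t '' A) ∂(k x) = k x A) :=
  expectation_operator_homogeneous_iff_kernel_identity_general 𝒳 ϑ hzero hgroup hϑmeas k hprob
    hkmeas
end

section
/- Let T be a transition semigroup on a Polish space X such that the domain of its full generator L_full is bp-dense in B_b(X). Then T is uniquely determined by L_full: if T₁ and T₂ are transition semigroups with the same full generator, then T₁(t) = T₂(t) for all t ≥ 0. -/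
open MeasureTheory Set Filter Topology
open scoped ENNReal

/-- The transition operator `T(t)` associated to the transition kernels `k`:
`(T(t) f)(x) = ∫ f dk(t, x, ·)`. -/
noncomputable def TOp {X : Type*} [MeasurableSpace X] (k : ℝ → X → Measure X)
    (t : ℝ) (f : X → ℝ) (x : X) : ℝ :=
  ∫ y, f y ∂(k t x)

/-- A set `M` of functions is bp-closed if it is closed under bounded pointwise limits of
sequences. -/
def BPClosed {X : Type*} (M : Set (X → ℝ)) : Prop :=
  ∀ (F : ℕ → X → ℝ) (f : X → ℝ), (∀ n, F n ∈ M) →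
    (∃ C, ∀ n x, |F n x| ≤ C) →
    (∀ x, Filter.Tendsto (fun n => F n x) Filter.atTop (nhds (f x))) → f ∈ M

/-- `(f, g)` belongs to the full generator of the transition semigroup with kernels `k`. -/
def InFullGen {X : Type*} [MeasurableSpace X] (k : ℝ → X → Measure X)
    (f g : X → ℝ) : Prop :=
  (∃ C, ∀ x, |f x| ≤ C) ∧ Measurable f ∧ (∃ C, ∀ x, |g x| ≤ C) ∧ Measurable g ∧
    ∀ t, 0 < t → ∀ x, TOp k t f x - f x = ∫ s in Set.Ioc (0:ℝ) t, TOp k s g x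


/-!
The set of bounded measurable `f` with `T₁(t) f = T₂(t) f` is bp-closed by dominated
convergence, so it suffices to treat `f` in the domain of the full generator, say `L f = g`.
Then `Tᵢ(t) f - f = ∫₀ᵗ Tᵢ(s) g ds`, and by uniqueness of the Laplace transform it suffices that
the resolvents `Rᵢ(l) g = ∫₀^∞ e^{-l s} Tᵢ(s) g ds` agree for `l = 1, 2, …`. They do:
integrating by parts, `R₁(l) h` lies in the domain of `L` with `L R₁(l) h = l R₁(l) h - h`, and
`l R₂(l) f = f + R₂(l) g` whenever `L f = g`, so that `R₂(l) h = R₁(l) h`.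
-/

open Real

section Laplace

variable {ψ : ℝ → ℝ} {C : ℝ}

lemma integrableOn_Ioi_exp_mul_of_bounded {a c : ℝ} (ha : a < 0)
    (hψm : AEStronglyMeasurable ψ (volume.restrict (Ioi c))) (hψb : ∀ s ∈ Ioi c, |ψ s| ≤ C) :
    IntegrableOn (fun s => exp (a * s) * ψ s) (Ioi c) :=
  (integrableOn_exp_mul_Ioi ha c).mul_bdd hψm <| by
    filter_upwards [ae_restrict_mem measurableSet_Ioi] with s hs
    simpa [Real.norm_eq_abs] using hψb s hs

lemma integrableOn_Ioc_of_bounded {a b : ℝ}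
    (hψm : AEStronglyMeasurable ψ (volume.restrict (Ioi a))) (hψb : ∀ s ∈ Ioi a, |ψ s| ≤ C) :
    IntegrableOn ψ (Ioc a b) :=
  .of_bound measure_Ioc_lt_top (hψm.mono_set Ioc_subset_Ioi_self) C <| by
    filter_upwards [ae_restrict_mem measurableSet_Ioc] with s hs
    simpa [Real.norm_eq_abs] using hψb s hs.1

lemma integral_exp_neg_mul_eval_mul_eq_zero
    (hψm : AEStronglyMeasurable ψ (volume.restrict (Ioi 0))) (hψb : ∀ s ∈ Ioi 0, |ψ s| ≤ C)
    (hmom : ∀ n : ℕ, ∫ s in Ioi 0, exp (-(n + 1 : ℝ) * s) * ψ s = 0) (p : Polynomial ℝ) :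
    ∫ s in Ioi 0, exp (-s) * p.eval (exp (-s)) * ψ s = 0 := by
  have hterm : ∀ j : ℕ, IntegrableOn
      (fun s => p.coeff j * (exp (-(j + 1 : ℝ) * s) * ψ s)) (Ioi 0) := fun j =>
    (integrableOn_Ioi_exp_mul_of_bounded (by linarith) hψm hψb).const_mul _
  have hexpand : ∀ s, exp (-s) * p.eval (exp (-s)) * ψ s
      = ∑ j ∈ Finset.range (p.natDegree + 1), p.coeff j * (exp (-(j + 1 : ℝ) * s) * ψ s) := by
    intro s
    simp only [Polynomial.eval_eq_sum_range, Finset.mul_sum, Finset.sum_mul]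
    refine Finset.sum_congr rfl fun j _ => ?_
    rw [← Real.exp_nat_mul, show -(j + 1 : ℝ) * s = -s + j * -s by ring, Real.exp_add]
    ring
  simp_rw [hexpand]
  rw [integral_finsetSum _ fun j _ => hterm j]
  exact Finset.sum_eq_zero fun j _ => by rw [integral_const_mul, hmom j, mul_zero]

/-- Weierstrass approximation in the variable `u = exp (-s)`. -/
lemma integral_exp_neg_mul_comp_mul_eq_zero
    (hψm : AEStronglyMeasurable ψ (volume.restrict (Ioi 0))) (hψb : ∀ s ∈ Ioi 0, |ψ s| ≤ C)
    (hmom : ∀ n : ℕ, ∫ s in Ioi 0, exp (-(n + 1 : ℝ) * s) * ψ s = 0) {φ : ℝ → ℝ}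
    (hφ : Continuous φ) :
    ∫ s in Ioi 0, exp (-s) * φ (exp (-s)) * ψ s = 0 := by
  have hC : 0 ≤ C := (abs_nonneg _).trans (hψb 1 (mem_Ioi.2 one_pos))
  have hmem : ∀ s ∈ Ioi (0 : ℝ), exp (-s) ∈ Icc (0 : ℝ) 1 := fun s hs =>
    ⟨(exp_pos _).le, exp_le_one_iff.2 (by linarith [mem_Ioi.1 hs])⟩
  have hint : ∀ F : ℝ → ℝ, Continuous F →
      IntegrableOn (fun s => exp (-s) * F (exp (-s)) * ψ s) (Ioi 0) := by
    intro F hF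
    obtain ⟨M, hM⟩ := isCompact_Icc.exists_bound_of_continuousOn hF.continuousOn
    have hexpψ : IntegrableOn (fun s => exp (-1 * s) * ψ s) (Ioi 0) :=
      integrableOn_Ioi_exp_mul_of_bounded (by norm_num) hψm hψb
    refine IntegrableOn.congr_fun (hexpψ.mul_bdd (c := M)
      (hF.comp (continuous_exp.comp continuous_neg)).aestronglyMeasurable ?_)
      (fun s _ => by simp only [Function.comp, neg_one_mul]; ring) measurableSet_Ioi
    filter_upwards [ae_restrict_mem measurableSet_Ioi] with s hs
    exact hM _ (hmem s hs)
  refine abs_nonpos_iff.1 (le_of_forall_pos_le_add fun ε hε => ?_)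
  obtain ⟨p, hp⟩ := exists_polynomial_near_of_continuousOn 0 1 φ hφ.continuousOn
    (ε / (C + 1)) (by positivity)
  have hpoly := integral_exp_neg_mul_eval_mul_eq_zero hψm hψb hmom p
  have hdiff : ∫ s in Ioi 0, exp (-s) * φ (exp (-s)) * ψ s
      = ∫ s in Ioi 0, exp (-s) * (φ (exp (-s)) - p.eval (exp (-s))) * ψ s := by
    simp only [mul_sub, sub_mul]
    rw [integral_sub (hint φ hφ) (hint (fun u => p.eval u) p.continuous), hpoly, sub_zero]
  calc |∫ s in Ioi 0, exp (-s) * φ (exp (-s)) * ψ s|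
      ≤ ∫ s in Ioi 0, exp (-1 * s) * (ε / (C + 1) * C) := by
        rw [hdiff, ← Real.norm_eq_abs]
        refine norm_integral_le_of_norm_le
          ((integrableOn_exp_mul_Ioi (by norm_num) 0).mul_const _) ?_
        filter_upwards [ae_restrict_mem measurableSet_Ioi] with s hs
        rw [norm_mul, norm_mul, Real.norm_of_nonneg (exp_pos _).le, neg_one_mul, mul_assoc,
          Real.norm_eq_abs, Real.norm_eq_abs, abs_sub_comm]
        gcongr
        exacts [(hp _ (hmem s hs)).le, hψb s hs]
    _ = ε / (C + 1) * C := by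
        rw [integral_mul_const, integral_exp_mul_Ioi (by norm_num)]
        simp
    _ ≤ 0 + ε := by
        rw [zero_add, div_mul_eq_mul_div, div_le_iff₀ (by positivity)]
        nlinarith

lemma integral_mul_eq_zero_of_hasCompactSupport
    (hψm : AEStronglyMeasurable ψ (volume.restrict (Ioi 0))) (hψb : ∀ s ∈ Ioi 0, |ψ s| ≤ C)
    (hmom : ∀ n : ℕ, ∫ s in Ioi 0, exp (-(n + 1 : ℝ) * s) * ψ s = 0) {g : ℝ → ℝ}
    (hg : Continuous g) (hgc : HasCompactSupport g) :
    ∫ s in Ioi 0, g s * ψ s = 0 := by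
  obtain ⟨A, hA⟩ := hgc.isCompact.bddAbove
  have hgA : ∀ s, A < s → g s = 0 := fun s hs =>
    image_eq_zero_of_notMem_tsupport fun h => (hA h).not_gt hs
  set δ := exp (-(A + 1))
  have hδ : ∀ u, 0 < max u δ := fun u => (exp_pos _).trans_le (le_max_right _ _)
  -- `g s = e^{-s} φ (e^{-s})` for `φ u = g (-log u) / u`; freezing `u` below `δ`, where
  -- `g (-log u)` vanishes, makes `φ` continuous at `0`.
  set φ : ℝ → ℝ := fun u => g (-log (max u δ)) / max u δ
  have hφ : Continuous φ :=
    (hg.comp ((continuous_id.max continuous_const).log fun u => (hδ u).ne').neg).div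
      (continuous_id.max continuous_const) fun u => (hδ u).ne'
  have hgφ : ∀ s, g s = exp (-s) * φ (exp (-s)) := by
    intro s
    rcases le_or_gt δ (exp (-s)) with h | h
    · simp only [φ, max_eq_left h, log_exp, neg_neg]
      field_simp
    · have hs : A + 1 < s := by simpa using exp_lt_exp.1 h
      simp only [φ, max_eq_right h.le, δ, log_exp, neg_neg, hgA s (by linarith),
        hgA (A + 1) (by linarith), zero_div, mul_zero]
  simp_rw [hgφ]
  exact integral_exp_neg_mul_comp_mul_eq_zero hψm hψb hmom hφ

theorem ae_eq_zero_of_integral_exp_mul_eq_zero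
    (hψm : AEStronglyMeasurable ψ (volume.restrict (Ioi 0))) (hψb : ∀ s ∈ Ioi 0, |ψ s| ≤ C)
    (hmom : ∀ n : ℕ, ∫ s in Ioi 0, exp (-(n + 1 : ℝ) * s) * ψ s = 0) :
    ∀ᵐ s ∂volume.restrict (Ioi 0), ψ s = 0 := by
  have hC : 0 ≤ C := (abs_nonneg _).trans (hψb 1 (mem_Ioi.2 one_pos))
  have hbound : ∀ s, ‖(Ioi 0).indicator ψ s‖ ≤ C := fun s => by
    by_cases hs : s ∈ Ioi 0
    · simpa [hs, Real.norm_eq_abs] using hψb s hs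
    · simpa [hs] using hC
  have hloc : LocallyIntegrable ((Ioi 0).indicator ψ) volume := fun s =>
    ⟨Metric.ball s 1, Metric.ball_mem_nhds s one_pos,
      .of_bound measure_ball_lt_top
        ((aestronglyMeasurable_indicator_iff measurableSet_Ioi).2 hψm).restrict C
        (ae_of_all _ hbound)⟩
  have hzero := ae_eq_zero_of_integral_contDiff_smul_eq_zero hloc fun g hg hgc => by
    simp_rw [smul_eq_mul, ← indicator_mul_right]
    rw [integral_indicator measurableSet_Ioi]
    exact integral_mul_eq_zero_of_hasCompactSupport hψm hψb hmom hg.continuous hgc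
  filter_upwards [ae_restrict_of_ae hzero, ae_restrict_mem measurableSet_Ioi] with s hs hmem
  rwa [indicator_of_mem hmem] at hs

end Laplace

section IntegrationByParts

variable {F γ : ℝ → ℝ}

lemma integral_exp_mul_of_eq_add_primitive {b c : ℝ} (μ : ℝ) (hb : 0 < b)
    (hγ : IntervalIntegrable γ volume 0 b) (hF : ∀ s ∈ Ioc 0 b, F s = c + ∫ u in 0..s, γ u) :
    ∫ s in 0..b, (μ * exp (μ * s) * F s + exp (μ * s) * γ s) = exp (μ * b) * F b - c := by
  have hexp : AbsolutelyContinuousOnInterval (fun s => exp (μ * s)) 0 b :=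
    ContDiffOn.absolutelyContinuousOnInterval (by fun_prop)
  have hprim : AbsolutelyContinuousOnInterval (fun s => c + ∫ u in 0..s, γ u) 0 b :=
    (LipschitzWith.const c).lipschitzOnWith.absolutelyContinuousOnInterval.add
      (hγ.absolutelyContinuousOnInterval_intervalIntegral left_mem_uIcc)
  have hparts := hexp.integral_deriv_mul_eq_sub hprim
  simp only [mul_zero, exp_zero, one_mul, intervalIntegral.integral_same, add_zero] at hparts
  rw [hF b ⟨hb, le_rfl⟩, ← hparts]
  refine intervalIntegral.integral_congr_ae ?_
  filter_upwards [hγ.ae_hasDerivAt_integral] with s hderiv hs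
  rw [uIoc_of_le hb.le] at hs
  have hprim' := (hderiv (by rw [uIcc_of_le hb.le]; exact Ioc_subset_Icc_self hs) 0
    left_mem_uIcc).const_add c
  have hexp' : HasDerivAt (fun s => exp (μ * s)) (exp (μ * s) * μ) s := by
    simpa using ((hasDerivAt_id s).const_mul μ).exp
  rw [hF s hs, hprim'.deriv, hexp'.deriv]
  ring

lemma mul_integral_Ioi_exp_mul_of_eq_add_primitive {c l C C' : ℝ} (hl : 0 < l)
    (hFm : AEStronglyMeasurable F (volume.restrict (Ioi 0))) (hFb : ∀ s ∈ Ioi 0, |F s| ≤ C)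
    (hγm : AEStronglyMeasurable γ (volume.restrict (Ioi 0))) (hγb : ∀ s ∈ Ioi 0, |γ s| ≤ C')
    (hF : ∀ s ∈ Ioi 0, F s = c + ∫ u in 0..s, γ u) :
    l * ∫ s in Ioi 0, exp (-l * s) * F s = c + ∫ s in Ioi 0, exp (-l * s) * γ s := by
  have hFi := integrableOn_Ioi_exp_mul_of_bounded (neg_lt_zero.2 hl) hFm hFb
  have hγi := integrableOn_Ioi_exp_mul_of_bounded (neg_lt_zero.2 hl) hγm hγb
  have hlim : Tendsto (fun b => ∫ s in 0..b, (-l * (exp (-l * s) * F s) + exp (-l * s) * γ s))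
      atTop (𝓝 (∫ s in Ioi 0, (-l * (exp (-l * s) * F s) + exp (-l * s) * γ s))) :=
    intervalIntegral_tendsto_integral_Ioi 0 ((hFi.const_mul (-l)).add hγi) tendsto_id
  rw [integral_add (hFi.const_mul _) hγi, integral_const_mul] at hlim
  have hdecay : Tendsto (fun b => exp (-l * b) * F b) atTop (𝓝 0) := by
    have hexp : Tendsto (fun b => C * exp (-l * b)) atTop (𝓝 0) := by
      simpa using (tendsto_exp_atBot.comp
        (tendsto_id.const_mul_atTop_of_neg (neg_lt_zero.2 hl))).const_mul C
    refine squeeze_zero_norm' ?_ hexp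
    filter_upwards [eventually_gt_atTop 0] with b hb
    rw [norm_mul, Real.norm_of_nonneg (exp_pos _).le, Real.norm_eq_abs, mul_comm]
    exact mul_le_mul_of_nonneg_right (hFb b hb) (exp_pos _).le
  have hlim' : Tendsto (fun b => ∫ s in 0..b, (-l * exp (-l * s) * F s + exp (-l * s) * γ s))
      atTop (𝓝 (0 - c)) := by
    refine (hdecay.sub_const c).congr' ?_
    filter_upwards [eventually_gt_atTop 0] with b hb
    refine (integral_exp_mul_of_eq_add_primitive (-l) hb ?_ fun s hs => hF s hs.1).symm
    exact (intervalIntegrable_iff_integrableOn_Ioc_of_le hb.le).2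
      (integrableOn_Ioc_of_bounded hγm hγb)
  simp only [mul_assoc] at hlim'
  linarith [tendsto_nhds_unique hlim hlim']

end IntegrationByParts

lemma integral_Ioi_comp_add_right (g : ℝ → ℝ) (t : ℝ) :
    ∫ s in Ioi 0, g (s + t) = ∫ s in Ioi t, g s := by
  have := (measurePreserving_add_right volume t).setIntegral_image_emb
    (MeasurableEquiv.addRight t).measurableEmbedding g (Ioi 0)
  rwa [image_add_const_Ioi, zero_add, eq_comm] at this

section TransitionOperator

variable {X : Type*} [MeasurableSpace X]

def IsMarkovFamily (k : ℝ → X → Measure X) : Prop :=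
  ∀ t, 0 ≤ t → ∀ x, IsProbabilityMeasure (k t x)

def HasMeasurableOrbits (k : ℝ → X → Measure X) : Prop :=
  ∀ f : X → ℝ, (∃ C, ∀ x, |f x| ≤ C) → Measurable f →
    Measurable fun p : ℝ × X => TOp k p.1 f p.2

def SatisfiesSemigroupLaw (k : ℝ → X → Measure X) : Prop :=
  ∀ t s, 0 ≤ t → 0 ≤ s → ∀ f : X → ℝ, (∃ C, ∀ x, |f x| ≤ C) → Measurable f →
    ∀ x, TOp k t (TOp k s f) x = TOp k (t + s) f x

variable {k : ℝ → X → Measure X} {h : X → ℝ} {C : ℝ}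

lemma abs_TOp_le (hk : IsMarkovFamily k) (hh : ∀ y, |h y| ≤ C) {t : ℝ} (ht : 0 ≤ t) (x : X) :
    |TOp k t h x| ≤ C := by
  have := hk t ht x
  simpa [TOp] using norm_integral_le_of_norm_le_const (μ := k t x) (f := h)
    (ae_of_all _ fun y => by simpa using hh y)

lemma HasMeasurableOrbits.measurable_orbit (hk : HasMeasurableOrbits k)
    (hh : ∀ y, |h y| ≤ C) (hhm : Measurable h) (x : X) :
    Measurable fun s => TOp k s h x :=
  (hk h ⟨C, hh⟩ hhm).comp (measurable_id.prodMk measurable_const)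

lemma TOp_const_mul_sub (hk : IsMarkovFamily k) {u v : X → ℝ} {Cu Cv : ℝ}
    (hu : ∀ y, |u y| ≤ Cu) (hum : Measurable u) (hv : ∀ y, |v y| ≤ Cv) (hvm : Measurable v)
    (l : ℝ) {s : ℝ} (hs : 0 ≤ s) (x : X) :
    TOp k s (fun y => l * u y - v y) x = l * TOp k s u x - TOp k s v x := by
  have := hk s hs x
  have hui : Integrable u (k s x) := .of_bound hum.aestronglyMeasurable Cu (ae_of_all _ hu)
  have hvi : Integrable v (k s x) := .of_bound hvm.aestronglyMeasurable Cv (ae_of_all _ hv)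
  simp only [TOp]
  rw [integral_sub (hui.const_mul l) hvi, integral_const_mul]

lemma tendsto_TOp_of_tendsto {t : ℝ} {x : X} [IsFiniteMeasure (k t x)] {F : ℕ → X → ℝ}
    {f : X → ℝ} (hFm : ∀ n, Measurable (F n)) (hFb : ∀ n y, |F n y| ≤ C)
    (hlim : ∀ y, Tendsto (fun n => F n y) atTop (𝓝 (f y))) :
    Tendsto (fun n => TOp k t (F n) x) atTop (𝓝 (TOp k t f x)) :=
  tendsto_integral_of_dominated_convergence (fun _ => C) (fun n => (hFm n).aestronglyMeasurable)
    (integrable_const C) (fun n => ae_of_all _ (hFb n)) (ae_of_all _ hlim)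

lemma bpClosed_setOf_TOp_eq {k₁ k₂ : ℝ → X → Measure X} {t : ℝ}
    [∀ x, IsFiniteMeasure (k₁ t x)] [∀ x, IsFiniteMeasure (k₂ t x)] :
    BPClosed {f : X → ℝ | Measurable f ∧ (∃ C, ∀ x, |f x| ≤ C) ∧
      ∀ x, TOp k₁ t f x = TOp k₂ t f x} := by
  rintro F f hF ⟨C, hFb⟩ hlim
  have hFm : ∀ n, Measurable (F n) := fun n => (hF n).1
  refine ⟨measurable_of_tendsto_metrizable hFm (tendsto_pi_nhds.2 hlim),
    ⟨C, fun y => le_of_tendsto' (hlim y).abs fun n => hFb n y⟩, fun x => ?_⟩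
  refine tendsto_nhds_unique (tendsto_TOp_of_tendsto hFm hFb hlim) ?_
  simpa only [(hF _).2.2 x] using tendsto_TOp_of_tendsto (k := k₂) hFm hFb hlim

noncomputable def resolventOp (k : ℝ → X → Measure X) (l : ℝ) (h : X → ℝ) (x : X) : ℝ :=
  ∫ s in Ioi 0, exp (-l * s) * TOp k s h x

variable {l : ℝ}

lemma integrableOn_exp_mul_TOp (hk : IsMarkovFamily k) (hjm : HasMeasurableOrbits k)
    (hl : 0 < l) (hh : ∀ y, |h y| ≤ C) (hhm : Measurable h) (x : X) :
    IntegrableOn (fun s => exp (-l * s) * TOp k s h x) (Ioi 0) :=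
  integrableOn_Ioi_exp_mul_of_bounded (neg_lt_zero.2 hl)
    (hjm.measurable_orbit hh hhm x).aestronglyMeasurable fun _ hs => abs_TOp_le hk hh hs.out.le x

lemma abs_resolventOp_le (hk : IsMarkovFamily k) (hl : 0 < l) (hh : ∀ y, |h y| ≤ C) (x : X) :
    |resolventOp k l h x| ≤ C / l := by
  calc |resolventOp k l h x| ≤ ∫ s in Ioi 0, exp (-l * s) * C := by
        rw [← Real.norm_eq_abs]
        refine norm_integral_le_of_norm_le
          ((integrableOn_exp_mul_Ioi (neg_lt_zero.2 hl) 0).mul_const C) ?_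
        filter_upwards [ae_restrict_mem measurableSet_Ioi] with s hs
        rw [norm_mul, Real.norm_of_nonneg (exp_pos _).le, Real.norm_eq_abs]
        exact mul_le_mul_of_nonneg_left (abs_TOp_le hk hh hs.out.le x) (exp_pos _).le
    _ = C / l := by
        rw [integral_mul_const, integral_exp_mul_Ioi (neg_lt_zero.2 hl)]
        field_simp
        simp

lemma measurable_resolventOp (hjm : HasMeasurableOrbits k) (hh : ∀ y, |h y| ≤ C)
    (hhm : Measurable h) : Measurable (resolventOp k l h) := by
  have hm : Measurable fun p : X × ℝ => exp (-l * p.2) * TOp k p.2 h p.1 :=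
    (measurable_exp.comp (measurable_const.mul measurable_snd)).mul
      ((hjm h ⟨C, hh⟩ hhm).comp measurable_swap)
  exact (hm.stronglyMeasurable.integral_prod_right' (ν := volume.restrict (Ioi 0))).measurable

lemma resolventOp_const_mul_sub (hk : IsMarkovFamily k) (hjm : HasMeasurableOrbits k)
    (hl : 0 < l) {u v : X → ℝ} {Cu Cv : ℝ} (hu : ∀ y, |u y| ≤ Cu) (hum : Measurable u)
    (hv : ∀ y, |v y| ≤ Cv) (hvm : Measurable v) (c : ℝ) (x : X) :
    resolventOp k l (fun y => c * u y - v y) x = c * resolventOp k l u x - resolventOp k l v x := by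
  rw [resolventOp, resolventOp, resolventOp, ← integral_const_mul, ← integral_sub
    ((integrableOn_exp_mul_TOp hk hjm hl hu hum x).const_mul c)
    (integrableOn_exp_mul_TOp hk hjm hl hv hvm x)]
  refine setIntegral_congr_fun measurableSet_Ioi fun s hs => ?_
  rw [TOp_const_mul_sub hk hu hum hv hvm c hs.out.le]
  ring

/-- Fubini in `(y, s)` followed by the semigroup law `T(t) T(s) = T(t + s)`. -/
lemma TOp_resolventOp_eq_integral (hk : IsMarkovFamily k) (hjm : HasMeasurableOrbits k)
    (hsg : SatisfiesSemigroupLaw k) (hl : 0 < l) (hh : ∀ y, |h y| ≤ C) (hhm : Measurable h)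
    {t : ℝ} (ht : 0 ≤ t) (x : X) :
    TOp k t (resolventOp k l h) x = ∫ s in Ioi 0, exp (-l * s) * TOp k (t + s) h x := by
  have := hk t ht x
  have hint : Integrable (fun p : X × ℝ => exp (-l * p.2) * TOp k p.2 h p.1)
      ((k t x).prod (volume.restrict (Ioi 0))) := by
    refine Integrable.mono' ((integrable_const C).mul_prod
      (integrableOn_exp_mul_Ioi (neg_lt_zero.2 hl) 0))
      ((measurable_exp.comp (measurable_const.mul measurable_snd)).mul
        ((hjm h ⟨C, hh⟩ hhm).comp measurable_swap)).aestronglyMeasurable ?_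
    filter_upwards [Measure.quasiMeasurePreserving_snd.ae (ae_restrict_mem measurableSet_Ioi)]
      with p hp
    rw [norm_mul, Real.norm_of_nonneg (exp_pos _).le, Real.norm_eq_abs, mul_comm]
    exact mul_le_mul_of_nonneg_right (abs_TOp_le hk hh hp.out.le _) (exp_pos _).le
  change ∫ y, (∫ s in Ioi 0, exp (-l * s) * TOp k s h y) ∂(k t x) = _
  rw [integral_integral_swap
    (f := fun y s => exp (-l * s) * TOp k s h y) hint]
  refine setIntegral_congr_fun measurableSet_Ioi fun s hs => ?_
  rw [integral_const_mul, ← hsg t s ht hs.out.le h ⟨C, hh⟩ hhm x]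
  rfl

lemma TOp_resolventOp (hk : IsMarkovFamily k) (hjm : HasMeasurableOrbits k)
    (hsg : SatisfiesSemigroupLaw k) (hl : 0 < l) (hh : ∀ y, |h y| ≤ C) (hhm : Measurable h)
    {t : ℝ} (ht : 0 ≤ t) (x : X) :
    TOp k t (resolventOp k l h) x
      = exp (l * t) * (resolventOp k l h x - ∫ s in 0..t, exp (-l * s) * TOp k s h x) := by
  rw [TOp_resolventOp_eq_integral hk hjm hsg hl hh hhm ht, resolventOp,
    ← intervalIntegral.integral_Ioi_sub_Ioi (integrableOn_exp_mul_TOp hk hjm hl hh hhm x) ht,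
    sub_sub_cancel, ← integral_Ioi_comp_add_right (fun s => exp (-l * s) * TOp k s h x),
    ← integral_const_mul]
  refine setIntegral_congr_fun measurableSet_Ioi fun s _ => ?_
  rw [add_comm t, ← mul_assoc, ← exp_add]
  ring_nf

lemma resolventOp_inFullGen (hk : IsMarkovFamily k) (hjm : HasMeasurableOrbits k)
    (hsg : SatisfiesSemigroupLaw k) (hl : 0 < l) (hh : ∀ y, |h y| ≤ C) (hhm : Measurable h) :
    InFullGen k (resolventOp k l h) (fun y => l * resolventOp k l h y - h y) := by
  have hR := abs_resolventOp_le hk hl hh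
  have hRm := measurable_resolventOp (l := l) hjm hh hhm
  refine ⟨⟨C / l, hR⟩, hRm, ⟨l * (C / l) + C, fun y => ?_⟩, (hRm.const_mul l).sub hhm,
    fun t ht x => ?_⟩
  · calc |l * resolventOp k l h y - h y| ≤ |l * resolventOp k l h y| + |h y| := abs_sub _ _
      _ ≤ l * (C / l) + C := by
        rw [abs_mul, abs_of_pos hl]
        gcongr
        exacts [hR y, hh y]
  · have hT := fun s (hs : 0 ≤ s) => TOp_resolventOp hk hjm hsg hl hh hhm hs x
    have hγ : IntervalIntegrable (fun s => -(exp (-l * s) * TOp k s h x)) volume 0 t :=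
      (intervalIntegrable_iff_integrableOn_Ioc_of_le ht.le).2
        ((integrableOn_exp_mul_TOp hk hjm hl hh hhm x).mono_set Ioc_subset_Ioi_self).neg
    rw [hT t ht.le, ← intervalIntegral.integral_of_le ht.le,
      ← integral_exp_mul_of_eq_add_primitive
        (F := fun s => resolventOp k l h x - ∫ u in 0..s, exp (-l * u) * TOp k u h x) l ht hγ
        fun s _ => by simp only [intervalIntegral.integral_neg, sub_eq_add_neg]]
    refine intervalIntegral.integral_congr fun s hs => ?_
    rw [uIcc_of_le ht.le] at hs
    have hexp : exp (l * s) * exp (-l * s) = 1 := by rw [← exp_add]; simp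
    rw [TOp_const_mul_sub hk hR hRm hh hhm l hs.1, hT s hs.1]
    linear_combination -TOp k s h x * hexp

/-- The Laplace transform of `T(t) f - f = ∫₀ᵗ T(s) g ds`. -/
lemma InFullGen.mul_resolventOp {f g : X → ℝ} (hfg : InFullGen k f g) (hk : IsMarkovFamily k)
    (hjm : HasMeasurableOrbits k) (hl : 0 < l) (x : X) :
    l * resolventOp k l f x = f x + resolventOp k l g x := by
  obtain ⟨⟨Cf, hf⟩, hfm, ⟨Cg, hg⟩, hgm, hrel⟩ := hfg
  refine mul_integral_Ioi_exp_mul_of_eq_add_primitive hl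
    (hjm.measurable_orbit hf hfm x).aestronglyMeasurable (fun s hs => abs_TOp_le hk hf hs.out.le x)
    (hjm.measurable_orbit hg hgm x).aestronglyMeasurable (fun s hs => abs_TOp_le hk hg hs.out.le x)
    fun s hs => ?_
  rw [intervalIntegral.integral_of_le hs.out.le, ← hrel s hs x]
  ring

/-- `R₁(l) h` lies in the domain with `L R₁(l) h = l R₁(l) h - h`, and `R₂(l)` inverts `l - L`
there. -/
lemma resolventOp_eq_of_inFullGen_iff {k₁ k₂ : ℝ → X → Measure X} (hk₁ : IsMarkovFamily k₁)
    (hk₂ : IsMarkovFamily k₂) (hjm₁ : HasMeasurableOrbits k₁) (hjm₂ : HasMeasurableOrbits k₂)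
    (hsg₁ : SatisfiesSemigroupLaw k₁) (hgen : ∀ f g, InFullGen k₁ f g ↔ InFullGen k₂ f g)
    (hl : 0 < l) (hh : ∀ y, |h y| ≤ C) (hhm : Measurable h) (x : X) :
    resolventOp k₁ l h x = resolventOp k₂ l h x := by
  have hgen₂ := (hgen _ _).1 (resolventOp_inFullGen hk₁ hjm₁ hsg₁ hl hh hhm)
  have hident := hgen₂.mul_resolventOp hk₂ hjm₂ hl x
  rw [resolventOp_const_mul_sub hk₂ hjm₂ hl (abs_resolventOp_le hk₁ hl hh)
    (measurable_resolventOp hjm₁ hh hhm) hh hhm] at hident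
  linarith

/-- The orbits `s ↦ Tᵢ(s) g x` have equal Laplace transforms, hence equal integrals over
`(0, t]`. -/
lemma TOp_eq_of_inFullGen {k₁ k₂ : ℝ → X → Measure X} (hk₁ : IsMarkovFamily k₁)
    (hk₂ : IsMarkovFamily k₂) (hjm₁ : HasMeasurableOrbits k₁) (hjm₂ : HasMeasurableOrbits k₂)
    {f g : X → ℝ} (hfg₁ : InFullGen k₁ f g) (hfg₂ : InFullGen k₂ f g) {x : X}
    (hres : ∀ n : ℕ, resolventOp k₁ (n + 1) g x = resolventOp k₂ (n + 1) g x)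
    {t : ℝ} (ht : 0 < t) :
    TOp k₁ t f x = TOp k₂ t f x := by
  obtain ⟨-, -, ⟨Cg, hg⟩, hgm, hrel₁⟩ := hfg₁
  have hψ := ae_eq_zero_of_integral_exp_mul_eq_zero (C := Cg + Cg)
    (ψ := fun s => TOp k₁ s g x - TOp k₂ s g x)
    ((hjm₁.measurable_orbit hg hgm x).sub (hjm₂.measurable_orbit hg hgm x)).aestronglyMeasurable
    (fun s hs => (abs_sub _ _).trans (add_le_add (abs_TOp_le hk₁ hg hs.out.le x)
      (abs_TOp_le hk₂ hg hs.out.le x)))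
    fun n => by
      simp only [mul_sub]
      rw [integral_sub (integrableOn_exp_mul_TOp hk₁ hjm₁ (by positivity) hg hgm x)
        (integrableOn_exp_mul_TOp hk₂ hjm₂ (by positivity) hg hgm x)]
      exact sub_eq_zero.2 (hres n)
  have hint : ∫ s in Ioc 0 t, TOp k₁ s g x = ∫ s in Ioc 0 t, TOp k₂ s g x :=
    setIntegral_congr_ae measurableSet_Ioc <| by
      filter_upwards [(ae_restrict_iff' measurableSet_Ioi).1 hψ] with s hs hmem
      exact sub_eq_zero.1 (hs hmem.1)
  linarith [hrel₁ t ht x, hfg₂.2.2.2.2 t ht x]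

end TransitionOperator

theorem transition_semigroup_unique_from_full_generator_general
    {X : Type*} [MeasurableSpace X]
    (k₁ k₂ : ℝ → X → Measure X)
    (hprob₁ : ∀ t, 0 ≤ t → ∀ x, IsProbabilityMeasure (k₁ t x))
    (hprob₂ : ∀ t, 0 ≤ t → ∀ x, IsProbabilityMeasure (k₂ t x))
    (hzero₁ : ∀ x, k₁ 0 x = Measure.dirac x)
    (hzero₂ : ∀ x, k₂ 0 x = Measure.dirac x)
    (hsg₁ : ∀ t s, 0 ≤ t → 0 ≤ s → ∀ f : X → ℝ, (∃ C, ∀ x, |f x| ≤ C) → Measurable f →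
      ∀ x, TOp k₁ t (TOp k₁ s f) x = TOp k₁ (t + s) f x)
    (hjm₁ : ∀ f : X → ℝ, (∃ C, ∀ x, |f x| ≤ C) → Measurable f →
      Measurable fun p : ℝ × X => TOp k₁ p.1 f p.2)
    (hjm₂ : ∀ f : X → ℝ, (∃ C, ∀ x, |f x| ≤ C) → Measurable f →
      Measurable fun p : ℝ × X => TOp k₂ p.1 f p.2)
    (hgeneq : ∀ f g : X → ℝ, InFullGen k₁ f g ↔ InFullGen k₂ f g)
    (hdense : ∀ M : Set (X → ℝ), BPClosed M →
      {f : X → ℝ | ∃ g, InFullGen k₁ f g} ⊆ M →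
      ∀ f : X → ℝ, (∃ C, ∀ x, |f x| ≤ C) → Measurable f → f ∈ M) :
    ∀ t, 0 ≤ t → ∀ f : X → ℝ, (∃ C, ∀ x, |f x| ≤ C) → Measurable f →
      ∀ x, TOp k₁ t f x = TOp k₂ t f x := by
  intro t ht f hfb hfm x
  rcases ht.eq_or_lt with rfl | ht
  · rw [TOp, TOp, hzero₁, hzero₂]
  have := hprob₁ t ht.le
  have := hprob₂ t ht.le
  refine (hdense _ bpClosed_setOf_TOp_eq ?_ f hfb hfm).2.2 x
  rintro f ⟨g, hfg⟩
  refine ⟨hfg.2.1, hfg.1, fun y => TOp_eq_of_inFullGen hprob₁ hprob₂ hjm₁ hjm₂ hfg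
    ((hgeneq f g).1 hfg) (fun n => ?_) ht⟩
  obtain ⟨-, -, ⟨C, hg⟩, hgm, -⟩ := hfg
  exact resolventOp_eq_of_inFullGen_iff hprob₁ hprob₂ hjm₁ hjm₂ hsg₁ hgeneq (by positivity) hg hgm y

/-- A transition semigroup whose full generator has bp-dense domain is uniquely determined
by its full generator: two transition semigroups with the same full generator coincide. -/
theorem transition_semigroup_unique_from_full_generator
    {X : Type*} [MetricSpace X] [CompleteSpace X]
    [TopologicalSpace.SeparableSpace X] [MeasurableSpace X] [BorelSpace X]
    (k₁ k₂ : ℝ → X → Measure X)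
    (hprob₁ : ∀ t, 0 ≤ t → ∀ x, IsProbabilityMeasure (k₁ t x))
    (hprob₂ : ∀ t, 0 ≤ t → ∀ x, IsProbabilityMeasure (k₂ t x))
    (hker₁ : ∀ t, 0 ≤ t → ∀ A : Set X, MeasurableSet A → Measurable fun x => k₁ t x A)
    (hker₂ : ∀ t, 0 ≤ t → ∀ A : Set X, MeasurableSet A → Measurable fun x => k₂ t x A)
    (hzero₁ : ∀ x, k₁ 0 x = Measure.dirac x)
    (hzero₂ : ∀ x, k₂ 0 x = Measure.dirac x)
    (hsg₁ : ∀ t s, 0 ≤ t → 0 ≤ s → ∀ f : X → ℝ, (∃ C, ∀ x, |f x| ≤ C) → Measurable f →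
      ∀ x, TOp k₁ t (TOp k₁ s f) x = TOp k₁ (t + s) f x)
    (hsg₂ : ∀ t s, 0 ≤ t → 0 ≤ s → ∀ f : X → ℝ, (∃ C, ∀ x, |f x| ≤ C) → Measurable f →
      ∀ x, TOp k₂ t (TOp k₂ s f) x = TOp k₂ (t + s) f x)
    (hjm₁ : ∀ f : X → ℝ, (∃ C, ∀ x, |f x| ≤ C) → Measurable f →
      Measurable fun p : ℝ × X => TOp k₁ p.1 f p.2)
    (hjm₂ : ∀ f : X → ℝ, (∃ C, ∀ x, |f x| ≤ C) → Measurable f →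
      Measurable fun p : ℝ × X => TOp k₂ p.1 f p.2)
    (hgeneq : ∀ f g : X → ℝ, InFullGen k₁ f g ↔ InFullGen k₂ f g)
    (hdense : ∀ M : Set (X → ℝ), BPClosed M →
      {f : X → ℝ | ∃ g, InFullGen k₁ f g} ⊆ M →
      ∀ f : X → ℝ, (∃ C, ∀ x, |f x| ≤ C) → Measurable f → f ∈ M) :
    ∀ t, 0 ≤ t → ∀ f : X → ℝ, (∃ C, ∀ x, |f x| ≤ C) → Measurable f →
      ∀ x, TOp k₁ t f x = TOp k₂ t f x :=
  transition_semigroup_unique_from_full_generator_general k₁ k₂ hprob₁ hprob₂ hzero₁ hzero₂ hsg₁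
    hjm₁ hjm₂ hgeneq hdense
end
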